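/- arXiv:2511.19216 — 3 statements merged into one kernel-verified Lean document; each statement's English description precedes it below -/
import Mathlib

section
/- Let Ω, M be Polish spaces, c_H : Ω × Ω → [0,∞] and c_M : M × M → [0,∞] measurable cost functions, M : Ω → M measurable, and L : Ω → [0,∞) measurable. Suppose c_M(M(ω₁), M(ω₂)) ≤ L(ω₂) · max( c_H(ω₁,ω₂)^{1/2} , c_H(ω₁,ω₂)^{1/(2r)} ) for all ω₁, ω₂ in a measurable set of P-probability 1, for some r ≥ 1. Suppose further that P satisfies the transportation cost inequality a₀ · T_{c_H}(ℚ, P) ≤ H(ℚ | P) for all probabilities ℚ on Ω, for some constant a₀ > 0. Then for any 1 ≤ α < 2 and any Borel probability Q on M with H(Q | P_M) < ∞, T_{c_M^α}(Q, P_M) ≤ b_α · max( H(Q|P_M)^{α/2}, H(Q|P_M)^{α/(2r)} ), where b_α = 2 ‖L^α‖_{L^{2/(2-α)}(P)} · max( a₀^{-α/(2r)}, a₀^{-α/2} ) and P_M = P ∘ M⁻¹. -/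
open MeasureTheory ENNReal

noncomputable def transportCost {E : Type*} [MeasurableSpace E]
    (c : E × E → ℝ≥0∞) (μ₁ μ₂ : Measure E) : ℝ≥0∞ :=
  ⨅ (π : Measure (E × E)) (_ : π.fst = μ₁ ∧ π.snd = μ₂), ∫⁻ p, c p ∂π

open Classical in
noncomputable def relEnt {E : Type*} [MeasurableSpace E] (ν μ : Measure E) : ℝ≥0∞ :=
  if ν ≪ μ then ENNReal.ofReal (∫ x, Real.log ((ν.rnDeriv μ x).toReal) ∂ν) else ⊤

/-!
Lift `Q` to `ρ = (dQ/dP_M ∘ M) • P`: then `ρ ∘ M⁻¹ = Q`, `H(ρ | P) = H(Q | P_M)`, and every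
coupling `π` of `ρ` and `P` is pushed forward by `M × M` to a coupling of `Q` and `P_M`. As `ρ ≪ P`,
the domination holds `π`-a.e.; raising it to the power `α`, applying Hölder with exponents
`2/(2-α)` and `2/α` (the second marginal of `π` is `P`) and Jensen for the concave `t ↦ t^{1/r}`
bounds the `c_M^α`-cost of `π` by `‖L^α‖ (u + u^{1/r})^{α/2}`, where `u = ∫ c_H dπ`. This bound is
monotone and continuous in `u`, so it passes to the infimum over couplings, and the transportation
inequality gives `T_{c_H}(ρ, P) ≤ H(Q | P_M) / a₀`.
-/

section Transport

variable {E E' : Type*} [MeasurableSpace E] [MeasurableSpace E']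

lemma transportCost_map_le {c : E' × E' → ℝ≥0∞} (hc : Measurable c) {F : E → E'}
    (hF : Measurable F) (μ₁ μ₂ : Measure E) :
    transportCost c (μ₁.map F) (μ₂.map F) ≤ transportCost (fun w => c (F w.1, F w.2)) μ₁ μ₂ := by
  refine le_iInf₂ fun π hπ => ?_
  have hFF : Measurable (Prod.map F F) := hF.prodMap hF
  have hmarg : (π.map (Prod.map F F)).fst = μ₁.map F ∧ (π.map (Prod.map F F)).snd = μ₂.map F := by
    rw [← hπ.1, ← hπ.2]
    simp only [Measure.fst, Measure.snd]
    rw [Measure.map_map measurable_fst hFF, Measure.map_map measurable_snd hFF,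
      Measure.map_map hF measurable_fst, Measure.map_map hF measurable_snd]
    exact ⟨rfl, rfl⟩
  calc transportCost c (μ₁.map F) (μ₂.map F) ≤ ∫⁻ p, c p ∂π.map (Prod.map F F) :=
      iInf₂_le (π.map (Prod.map F F)) hmarg
    _ = ∫⁻ w, c (F w.1, F w.2) ∂π := lintegral_map hc hFF

lemma transportCost_le_of_lintegral_le {c c' : E × E → ℝ≥0∞} {μ₁ μ₂ : Measure E}
    [IsProbabilityMeasure μ₁] [IsProbabilityMeasure μ₂] {Φ : ℝ≥0∞ → ℝ≥0∞} (hΦ : Monotone Φ)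
    (hΦc : Continuous Φ)
    (h : ∀ π : Measure (E × E), IsProbabilityMeasure π → π.fst = μ₁ → π.snd = μ₂ →
      ∫⁻ p, c' p ∂π ≤ Φ (∫⁻ p, c p ∂π)) :
    transportCost c' μ₁ μ₂ ≤ Φ (transportCost c μ₁ μ₂) := by
  have : Nonempty {π : Measure (E × E) // π.fst = μ₁ ∧ π.snd = μ₂} :=
    ⟨⟨μ₁.prod μ₂, Measure.fst_prod, Measure.snd_prod⟩⟩
  simp only [transportCost, iInf_subtype']
  rw [hΦ.map_ciInf_of_continuousAt hΦc.continuousAt]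
  refine iInf_mono fun π => h π ?_ π.2.1 π.2.2
  constructor
  rw [← Measure.fst_univ, π.2.1, measure_univ]

end Transport

section Lift

variable {α β : Type*} [MeasurableSpace α] [MeasurableSpace β]

lemma map_withDensity_comp (μ : Measure α) {F : α → β} (hF : Measurable F) {g : β → ℝ≥0∞}
    (hg : Measurable g) : (μ.withDensity (g ∘ F)).map F = (μ.map F).withDensity g := by
  ext s hs
  rw [Measure.map_apply hF hs, withDensity_apply _ (hF hs), withDensity_apply _ hs,
    setLIntegral_map hs hg hF, Function.comp_def]

lemma absolutelyContinuous_of_relEnt_ne_top {ν μ : Measure α} (h : relEnt ν μ ≠ ⊤) : ν ≪ μ := by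
  by_contra hac
  exact h (if_neg hac)

lemma exists_map_eq_relEnt_eq (μ : Measure α) [IsFiniteMeasure μ] {F : α → β} (hF : Measurable F)
    {ν : Measure β} [IsFiniteMeasure ν] (hν : ν ≪ μ.map F) :
    ∃ ρ : Measure α, ρ ≪ μ ∧ ρ.map F = ν ∧ relEnt ρ μ = relEnt ν (μ.map F) := by
  set g := ν.rnDeriv (μ.map F)
  have hg : Measurable g := Measure.measurable_rnDeriv _ _
  set ρ := μ.withDensity (g ∘ F)
  have hρμ : ρ ≪ μ := withDensity_absolutelyContinuous _ _
  have hρν : ρ.map F = ν := by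
    rw [map_withDensity_comp μ hF hg, Measure.withDensity_rnDeriv_eq _ _ hν]
  refine ⟨ρ, hρμ, hρν, ?_⟩
  have hdens : ρ.rnDeriv μ =ᵐ[ρ] g ∘ F := hρμ.ae_eq (Measure.rnDeriv_withDensity μ (hg.comp hF))
  have hlog : Measurable fun y => Real.log (g y).toReal := hg.ennreal_toReal.log
  have hpush := integral_map (μ := ρ) hF.aemeasurable hlog.aestronglyMeasurable
  rw [hρν] at hpush
  simp only [relEnt, if_pos hρμ, if_pos hν]
  rw [integral_congr_ae (hdens.mono fun x hx => by rw [hx]), hpush]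
  rfl

end Lift

section Holder

variable {β : Type*} [MeasurableSpace β]

lemma lintegral_rpow_le_rpow_lintegral (π : Measure β) [IsProbabilityMeasure π] {f : β → ℝ≥0∞}
    (hf : AEMeasurable f π) {s : ℝ} (hs0 : 0 < s) (hs1 : s ≤ 1) :
    ∫⁻ x, f x ^ s ∂π ≤ (∫⁻ x, f x ∂π) ^ s := by
  rcases hs1.eq_or_lt with rfl | hs1
  · simp
  have hc : (1/s).HolderConjugate (Real.conjExponent (1/s)) :=
    .conjExponent (by rw [lt_div_iff₀ hs0]; simpa)
  have H := ENNReal.lintegral_mul_le_Lp_mul_Lq π hc (hf.pow_const s)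
    (aemeasurable_const (b := (1 : ℝ≥0∞)))
  simp only [Pi.mul_apply, mul_one, ENNReal.one_rpow, lintegral_const, measure_univ] at H
  simpa [← ENNReal.rpow_mul, hs0.ne'] using H

lemma rpow_le_ofReal_rpow_mul_max_rpow {f c : ℝ≥0∞} {L r α : ℝ} (hL0 : 0 ≤ L) (hα0 : 0 ≤ α)
    (hf : f ≤ ENNReal.ofReal L * max (c ^ (1/2 : ℝ)) (c ^ (1/(2*r)))) :
    f ^ α ≤ ENNReal.ofReal (L ^ α) * max c (c ^ (1/r)) ^ (α/2) := by
  calc f ^ α ≤ (ENNReal.ofReal L * max (c ^ (1/2 : ℝ)) (c ^ (1/(2*r)))) ^ α := by gcongr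
    _ = ENNReal.ofReal (L ^ α) * max c (c ^ (1/r)) ^ (α/2) := by
      rw [ENNReal.mul_rpow_of_nonneg _ _ hα0, ENNReal.ofReal_rpow_of_nonneg hL0 hα0,
        (ENNReal.monotone_rpow_of_nonneg hα0).map_max,
        (ENNReal.monotone_rpow_of_nonneg (by positivity)).map_max,
        ← ENNReal.rpow_mul, ← ENNReal.rpow_mul, ← ENNReal.rpow_mul]
      ring_nf

lemma lintegral_max_rpow_le (π : Measure β) [IsProbabilityMeasure π] {c : β → ℝ≥0∞}
    (hc : AEMeasurable c π) {r : ℝ} (hr : 1 ≤ r) :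
    ∫⁻ x, max (c x) (c x ^ (1/r)) ∂π ≤ ∫⁻ x, c x ∂π + (∫⁻ x, c x ∂π) ^ (1/r) := calc
  ∫⁻ x, max (c x) (c x ^ (1/r)) ∂π ≤ ∫⁻ x, c x + c x ^ (1/r) ∂π :=
    lintegral_mono fun x => max_le (le_add_right le_rfl) (le_add_left le_rfl)
  _ = ∫⁻ x, c x ∂π + ∫⁻ x, c x ^ (1/r) ∂π := lintegral_add_left' hc _
  _ ≤ ∫⁻ x, c x ∂π + (∫⁻ x, c x ∂π) ^ (1/r) := by
    gcongr
    exact lintegral_rpow_le_rpow_lintegral π hc (by positivity)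
      (div_le_one_of_le₀ hr (by linarith))

lemma lintegral_rpow_le_eLpNorm_mul_of_le_mul_max (π : Measure β) [IsProbabilityMeasure π]
    {f c : β → ℝ≥0∞} {L : β → ℝ} (hL : AEMeasurable L π) (hL0 : ∀ x, 0 ≤ L x)
    (hc : AEMeasurable c π) {r α : ℝ} (hr : 1 ≤ r) (hα0 : 0 < α) (hα2 : α < 2)
    (hf : ∀ᵐ x ∂π, f x ≤ ENNReal.ofReal (L x) * max (c x ^ (1/2 : ℝ)) (c x ^ (1/(2*r)))) :
    ∫⁻ x, f x ^ α ∂π ≤ eLpNorm (fun x => L x ^ α) (ENNReal.ofReal (2/(2-α))) π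
      * (∫⁻ x, c x ∂π + (∫⁻ x, c x ∂π) ^ (1/r)) ^ (α/2) := by
  set p := 2/(2-α)
  set q := 2/α
  have hp0 : 0 < p := div_pos two_pos (by linarith)
  have hpq : p.HolderConjugate q := by
    rw [Real.holderConjugate_iff]
    refine ⟨by rw [lt_div_iff₀ (by linarith)]; linarith, ?_⟩
    rw [inv_div, inv_div]
    ring
  set g : β → ℝ≥0∞ := fun x => max (c x) (c x ^ (1/r))
  have hg : AEMeasurable g π := hc.max (hc.pow_const _)
  have hLp : (∫⁻ x, ENNReal.ofReal (L x ^ α) ^ p ∂π) ^ (1/p)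
      = eLpNorm (fun x => L x ^ α) (ENNReal.ofReal p) π := by
    rw [eLpNorm_eq_lintegral_rpow_enorm_toReal (by simpa using hp0) ofReal_ne_top,
      toReal_ofReal hp0.le]
    simp_rw [Real.enorm_eq_ofReal (Real.rpow_nonneg (hL0 _) α)]
  have hgq : (∫⁻ x, (g x ^ (α/2)) ^ q ∂π) ^ (1/q) = (∫⁻ x, g x ∂π) ^ (α/2) := by
    have hαq : α/2 * q = 1 := by simp only [q]; field_simp
    simp_rw [← ENNReal.rpow_mul, hαq, ENNReal.rpow_one, q, one_div_div]
  calc ∫⁻ x, f x ^ α ∂π ≤ ∫⁻ x, ENNReal.ofReal (L x ^ α) * g x ^ (α/2) ∂π :=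
        lintegral_mono_ae (hf.mono fun x hx => rpow_le_ofReal_rpow_mul_max_rpow (hL0 x) hα0.le hx)
    _ ≤ (∫⁻ x, ENNReal.ofReal (L x ^ α) ^ p ∂π) ^ (1/p)
          * (∫⁻ x, (g x ^ (α/2)) ^ q ∂π) ^ (1/q) :=
        ENNReal.lintegral_mul_le_Lp_mul_Lq π hpq (hL.pow_const α).ennreal_ofReal (hg.pow_const _)
    _ ≤ _ := by
      rw [hLp, hgq]
      gcongr
      exact lintegral_max_rpow_le π hc hr

end Holder

lemma lintegral_rpow_comp_prodMap_le {Ω M : Type*} [MeasurableSpace Ω] {P ρ : Measure Ω}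
    {π : Measure (Ω × Ω)} [IsProbabilityMeasure π] (hρP : ρ ≪ P) (hπρ : π.fst = ρ)
    (hπP : π.snd = P) {cH : Ω × Ω → ℝ≥0∞} (hcH : Measurable cH) {cM : M × M → ℝ≥0∞}
    {F : Ω → M} {L : Ω → ℝ} (hL : Measurable L) (hL0 : ∀ ω, 0 ≤ L ω) {r α : ℝ} (hr : 1 ≤ r)
    (hα0 : 0 < α) (hα2 : α < 2) {S : Set Ω} (hSP : ∀ᵐ ω ∂P, ω ∈ S)
    (hdom : ∀ ω₁ ∈ S, ∀ ω₂ ∈ S,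
      cM (F ω₁, F ω₂) ≤ ENNReal.ofReal (L ω₂)
        * max (cH (ω₁, ω₂) ^ (1/2 : ℝ)) (cH (ω₁, ω₂) ^ (1/(2*r)))) :
    ∫⁻ w, cM (F w.1, F w.2) ^ α ∂π
      ≤ eLpNorm (fun ω => L ω ^ α) (ENNReal.ofReal (2/(2-α))) P
        * (∫⁻ w, cH w ∂π + (∫⁻ w, cH w ∂π) ^ (1/r)) ^ (α/2) := by
  have hSfst : ∀ᵐ ω ∂π.fst, ω ∈ S := hπρ ▸ hρP.ae_le hSP
  have hSsnd : ∀ᵐ ω ∂π.snd, ω ∈ S := hπP ▸ hSP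
  have hSπ : ∀ᵐ w ∂π, w.1 ∈ S ∧ w.2 ∈ S :=
    (ae_of_ae_map measurable_fst.aemeasurable hSfst).and
      (ae_of_ae_map measurable_snd.aemeasurable hSsnd)
  have hLα : eLpNorm (fun w : Ω × Ω => L w.2 ^ α) (ENNReal.ofReal (2/(2-α))) π
      = eLpNorm (fun ω => L ω ^ α) (ENNReal.ofReal (2/(2-α))) P := by
    rw [← hπP]
    exact (eLpNorm_map_measure (hL.pow_const α).aestronglyMeasurable
      measurable_snd.aemeasurable).symm
  simpa only [hLα] using lintegral_rpow_le_eLpNorm_mul_of_le_mul_max π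
    (f := fun w => cM (F w.1, F w.2)) (L := fun w => L w.2)
    (hL.comp measurable_snd).aemeasurable (fun w => hL0 w.2)
    hcH.aemeasurable hr hα0 hα2 (hSπ.mono fun w hw => hdom _ hw.1 _ hw.2)

lemma rpow_add_rpow_le_two_mul_max_mul_max {T b H : ℝ≥0∞} (hTH : T ≤ b * H) {s t : ℝ}
    (hs : 0 ≤ s) (ht : 0 ≤ t) :
    T ^ s + T ^ t ≤ 2 * max (b ^ t) (b ^ s) * max (H ^ s) (H ^ t) := by
  have hpow : ∀ u : ℝ, 0 ≤ u → T ^ u ≤ b ^ u * H ^ u := fun u hu =>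
    (ENNReal.rpow_le_rpow hTH hu).trans_eq (ENNReal.mul_rpow_of_nonneg _ _ hu)
  calc T ^ s + T ^ t
      ≤ max (b ^ t) (b ^ s) * max (H ^ s) (H ^ t) + max (b ^ t) (b ^ s) * max (H ^ s) (H ^ t) :=
        add_le_add ((hpow s hs).trans (mul_le_mul' (le_max_right _ _) (le_max_left _ _)))
          ((hpow t ht).trans (mul_le_mul' (le_max_left _ _) (le_max_right _ _)))
    _ = 2 * max (b ^ t) (b ^ s) * max (H ^ s) (H ^ t) := by ring

theorem stmt2_general {Ω M : Type*}
    [MeasurableSpace Ω]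
    [MeasurableSpace M]
    (P : Measure Ω) [IsProbabilityMeasure P]
    (cH : Ω × Ω → ℝ≥0∞) (hcH : Measurable cH)
    (cM : M × M → ℝ≥0∞) (hcM : Measurable cM)
    (F : Ω → M) (hF : Measurable F)
    (L : Ω → ℝ) (hL : Measurable L) (hL0 : ∀ ω, 0 ≤ L ω)
    (r : ℝ) (hr : 1 ≤ r)
    (S : Set Ω) (hS : MeasurableSet S) (hS1 : P S = 1)
    (hdom : ∀ ω₁ ∈ S, ∀ ω₂ ∈ S,
      cM (F ω₁, F ω₂) ≤ ENNReal.ofReal (L ω₂)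
        * max (cH (ω₁, ω₂) ^ (1/2 : ℝ)) (cH (ω₁, ω₂) ^ (1/(2*r))))
    (a₀ : ℝ) (ha₀ : 0 < a₀)
    (hTCI : ∀ (ρ : Measure Ω), IsProbabilityMeasure ρ →
      ENNReal.ofReal a₀ * transportCost cH ρ P ≤ relEnt ρ P)
    (α : ℝ) (hα1 : 1 ≤ α) (hα2 : α < 2)
    (hLp : eLpNorm (fun ω => L ω ^ α) (ENNReal.ofReal (2/(2-α))) P ≠ ⊤)
    (Q : Measure M) [IsProbabilityMeasure Q] (hQ : relEnt Q (P.map F) ≠ ⊤) :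
    transportCost (fun p => cM p ^ α) Q (P.map F)
      ≤ 2 * eLpNorm (fun ω => L ω ^ α) (ENNReal.ofReal (2/(2-α))) P
        * max ((ENNReal.ofReal a₀)⁻¹ ^ (α/(2*r))) ((ENNReal.ofReal a₀)⁻¹ ^ (α/2))
        * max (relEnt Q (P.map F) ^ (α/2)) (relEnt Q (P.map F) ^ (α/(2*r))) := by
  have hα0 : 0 < α := by linarith
  obtain ⟨ρ, hρP, hρQ, hρent⟩ :=
    exists_map_eq_relEnt_eq P hF (absolutelyContinuous_of_relEnt_ne_top hQ)
  have : IsProbabilityMeasure ρ := by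
    rw [← Measure.isProbabilityMeasure_map_iff hF.aemeasurable, hρQ]
    infer_instance
  set N := eLpNorm (fun ω => L ω ^ α) (ENNReal.ofReal (2/(2-α))) P
  set T := transportCost cH ρ P
  have hTH : T ≤ (ENNReal.ofReal a₀)⁻¹ * relEnt Q (P.map F) := by
    rw [mul_comm, ← div_eq_mul_inv, ENNReal.le_div_iff_mul_le (.inl (by simpa using ha₀))
      (.inl ofReal_ne_top), mul_comm, ← hρent]
    exact hTCI ρ ‹_›
  have hΦ : Continuous fun u : ℝ≥0∞ => N * (u + u ^ (1/r)) ^ (α/2) :=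
    (ENNReal.continuous_const_mul hLp).comp
      (ENNReal.continuous_rpow_const.comp (continuous_id.add ENNReal.continuous_rpow_const))
  calc transportCost (fun p => cM p ^ α) Q (P.map F)
      ≤ transportCost (fun w => cM (F w.1, F w.2) ^ α) ρ P :=
        hρQ ▸ transportCost_map_le (hcM.pow_const α) hF ρ P
    _ ≤ N * (T + T ^ (1/r)) ^ (α/2) :=
        transportCost_le_of_lintegral_le (fun u v huv => by gcongr) hΦ fun π _ hπρ hπP =>
          lintegral_rpow_comp_prodMap_le hρP hπρ hπP hcH hL hL0 hr hα0 hα2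
            ((ae_mem_iff_measure_eq hS.nullMeasurableSet).2 (hS1.trans measure_univ.symm)) hdom
    _ ≤ N * (T ^ (α/2) + T ^ (α/(2*r))) := by
        gcongr
        refine (ENNReal.rpow_add_le_add_rpow _ _ (by positivity) (by linarith)).trans_eq ?_
        rw [← ENNReal.rpow_mul, one_div_mul_eq_div, div_div]
    _ ≤ N * (2 * max ((ENNReal.ofReal a₀)⁻¹ ^ (α/(2*r))) ((ENNReal.ofReal a₀)⁻¹ ^ (α/2))
          * max (relEnt Q (P.map F) ^ (α/2)) (relEnt Q (P.map F) ^ (α/(2*r)))) := by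
        gcongr
        exact rpow_add_rpow_le_two_mul_max_mul_max hTH (by positivity) (by positivity)
    _ = _ := by ring

/-- Extended contraction principle for transportation cost inequalities
(Gasteratos–Jacquier). -/
theorem stmt2 {Ω M : Type*}
    [MeasurableSpace Ω] [TopologicalSpace Ω] [PolishSpace Ω] [BorelSpace Ω]
    [MeasurableSpace M] [TopologicalSpace M] [PolishSpace M] [BorelSpace M]
    (P : Measure Ω) [IsProbabilityMeasure P]
    (cH : Ω × Ω → ℝ≥0∞) (hcH : Measurable cH)
    (cM : M × M → ℝ≥0∞) (hcM : Measurable cM)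
    (F : Ω → M) (hF : Measurable F)
    (L : Ω → ℝ) (hL : Measurable L) (hL0 : ∀ ω, 0 ≤ L ω)
    (r : ℝ) (hr : 1 ≤ r)
    (S : Set Ω) (hS : MeasurableSet S) (hS1 : P S = 1)
    (hdom : ∀ ω₁ ∈ S, ∀ ω₂ ∈ S,
      cM (F ω₁, F ω₂) ≤ ENNReal.ofReal (L ω₂)
        * max (cH (ω₁, ω₂) ^ (1/2 : ℝ)) (cH (ω₁, ω₂) ^ (1/(2*r))))
    (a₀ : ℝ) (ha₀ : 0 < a₀)
    (hTCI : ∀ (ρ : Measure Ω), IsProbabilityMeasure ρ →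
      ENNReal.ofReal a₀ * transportCost cH ρ P ≤ relEnt ρ P)
    (α : ℝ) (hα1 : 1 ≤ α) (hα2 : α < 2)
    (hLp : eLpNorm (fun ω => L ω ^ α) (ENNReal.ofReal (2/(2-α))) P ≠ ⊤)
    (Q : Measure M) [IsProbabilityMeasure Q] (hQ : relEnt Q (P.map F) ≠ ⊤) :
    transportCost (fun p => cM p ^ α) Q (P.map F)
      ≤ 2 * eLpNorm (fun ω => L ω ^ α) (ENNReal.ofReal (2/(2-α))) P
        * max ((ENNReal.ofReal a₀)⁻¹ ^ (α/(2*r))) ((ENNReal.ofReal a₀)⁻¹ ^ (α/2))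
        * max (relEnt Q (P.map F) ^ (α/2)) (relEnt Q (P.map F) ^ (α/(2*r))) :=
  stmt2_general P cH hcH cM hcM F hF L hL hL0 r hr S hS hS1 hdom a₀ ha₀ hTCI α hα1 hα2 hLp Q hQ
end

section
/- Let (E,d) be a Polish space, x₀ ∈ E, and μ a Borel probability on E. If ∫_E exp(κ d(x₀,x)²) μ(dx) < ∞ for some κ > 0, then μ has Gaussian concentration: there exist constants a₁, a₂ > 0 such that for every 1-Lipschitz function F : E → ℝ with median m_F, μ(F - m_F > r) ≤ a₁ exp(-a₂ r²) for all r > 0. -/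
open MeasureTheory ENNReal

/-!
A median `m` of `F` forces a point `y` with `F y ≤ m` in a fixed ball `B(x₀, D)`, where `D` is
chosen by the Chernoff bound for `dist x₀ · ^ 2` so that the complement of the ball has mass
below `1/2`. Then `F x - m > r` gives `r < dist x₀ x + D` by the Lipschitz property, hence
`r² / 2 - D² ≤ dist x₀ x ²`, and the Chernoff bound once more yields the Gaussian tail
`mgf · exp (κ D²) · exp (-(κ/2) r²)`.
-/

open Filter Topology ProbabilityTheory

section

variable {E : Type*} [PseudoMetricSpace E]

theorem LipschitzWith.setOf_sub_gt_subset {F : E → ℝ} (hF : LipschitzWith 1 F) {x₀ y : E}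
    {m D r : ℝ} (hy : F y ≤ m) (hyD : dist x₀ y ≤ D) (hr : 0 < r) :
    {x | F x - m > r} ⊆ {x | r ^ 2 / 2 - D ^ 2 ≤ dist x₀ x ^ 2} := by
  refine Set.ofPred_subset_ofPred.2 fun x hx => ?_
  have hFx : F x ≤ F y + dist x y := by simpa using hF.le_add_mul x y
  have hxy : dist x y ≤ dist x₀ x + dist x₀ y := dist_triangle_left x y x₀
  nlinarith [sq_nonneg (dist x₀ x - D)]

variable [MeasurableSpace E]

theorem exists_measureReal_dist_gt_lt (x₀ : E) (μ : Measure E) [IsFiniteMeasure μ]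
    {κ : ℝ} (hκ : 0 < κ) (hint : Integrable (fun x => Real.exp (κ * dist x₀ x ^ 2)) μ)
    {ε : ℝ} (hε : 0 < ε) : ∃ D, 0 ≤ D ∧ μ.real {x | D < dist x₀ x} < ε := by
  have hbound : Tendsto (fun D : ℝ => Real.exp (-κ * D ^ 2) * mgf (fun x => dist x₀ x ^ 2) μ κ)
      atTop (𝓝 0) := by
    have : Tendsto (fun D : ℝ => κ * D ^ 2) atTop atTop :=
      (tendsto_pow_atTop two_ne_zero).const_mul_atTop hκ
    simpa [neg_mul] using (Real.tendsto_exp_neg_atTop_nhds_zero.comp this).mul_const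
      (mgf (fun x => dist x₀ x ^ 2) μ κ)
  obtain ⟨D, hD₀, hD⟩ := ((eventually_ge_atTop 0).and (hbound.eventually (gt_mem_nhds hε))).exists
  refine ⟨D, hD₀, lt_of_le_of_lt ?_ hD⟩
  calc μ.real {x | D < dist x₀ x} ≤ μ.real {x | D ^ 2 ≤ dist x₀ x ^ 2} :=
        measureReal_mono <| Set.ofPred_subset_ofPred.2 fun _ hx => pow_le_pow_left₀ hD₀ hx.le 2
    _ ≤ _ := measure_ge_le_exp_mul_mgf _ hκ.le hint

theorem exists_le_and_dist_le_of_measure_lt {μ : Measure E} {F : E → ℝ} {m D : ℝ} {x₀ : E}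
    (hm : (1 / 2 : ℝ≥0∞) ≤ μ {x | F x ≤ m}) (hD : μ {x | D < dist x₀ x} < 1 / 2) :
    ∃ y, F y ≤ m ∧ dist x₀ y ≤ D := by
  by_contra! h
  exact (hm.trans (measure_mono fun x hx => h x hx)).not_gt hD

end

theorem stmt6_general {E : Type*} [MetricSpace E]
    [MeasurableSpace E]
    (x₀ : E) (μ : Measure E) [IsProbabilityMeasure μ]
    (κ : ℝ) (hκ : 0 < κ)
    (hint : Integrable (fun x => Real.exp (κ * dist x₀ x ^ 2)) μ) :
    ∃ a₁ > (0:ℝ), ∃ a₂ > (0:ℝ), ∀ F : E → ℝ, LipschitzWith 1 F →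
      ∀ m : ℝ, (1/2 : ℝ≥0∞) ≤ μ {x | F x ≤ m} → (1/2 : ℝ≥0∞) ≤ μ {x | m ≤ F x} →
      ∀ r > (0:ℝ), μ {x | F x - m > r} ≤ ENNReal.ofReal (a₁ * Real.exp (-a₂ * r ^ 2)) := by
  set M := mgf (fun x => dist x₀ x ^ 2) μ κ
  obtain ⟨D, hD₀, hD⟩ := exists_measureReal_dist_gt_lt x₀ μ hκ hint one_half_pos
  have hD' : μ {x | D < dist x₀ x} < 1 / 2 := by
    rw [← ofReal_measureReal]
    simpa using (ENNReal.ofReal_lt_ofReal_iff one_half_pos).2 hD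
  refine ⟨M * Real.exp (κ * D ^ 2), mul_pos (mgf_pos hint) (Real.exp_pos _), κ / 2,
    half_pos hκ, fun F hF m hm _ r hr => ?_⟩
  obtain ⟨y, hy, hyD⟩ := exists_le_and_dist_le_of_measure_lt hm hD'
  rw [← ofReal_measureReal]
  refine ENNReal.ofReal_le_ofReal ?_
  calc μ.real {x | F x - m > r}
      ≤ μ.real {x | r ^ 2 / 2 - D ^ 2 ≤ dist x₀ x ^ 2} :=
        measureReal_mono (hF.setOf_sub_gt_subset hy hyD hr)
    _ ≤ Real.exp (-κ * (r ^ 2 / 2 - D ^ 2)) * M := measure_ge_le_exp_mul_mgf _ hκ.le hint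
    _ = M * Real.exp (κ * D ^ 2) * Real.exp (-(κ / 2) * r ^ 2) := by
        rw [mul_comm, mul_assoc, ← Real.exp_add]; ring_nf

/-- Exponential square integrability of the distance implies Gaussian concentration
around medians for 1-Lipschitz functions. -/
theorem stmt6 {E : Type*} [MetricSpace E] [CompleteSpace E] [SecondCountableTopology E]
    [MeasurableSpace E] [BorelSpace E]
    (x₀ : E) (μ : Measure E) [IsProbabilityMeasure μ]
    (κ : ℝ) (hκ : 0 < κ)
    (hint : Integrable (fun x => Real.exp (κ * dist x₀ x ^ 2)) μ) :
    ∃ a₁ > (0:ℝ), ∃ a₂ > (0:ℝ), ∀ F : E → ℝ, LipschitzWith 1 F →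
      ∀ m : ℝ, (1/2 : ℝ≥0∞) ≤ μ {x | F x ≤ m} → (1/2 : ℝ≥0∞) ≤ μ {x | m ≤ F x} →
      ∀ r > (0:ℝ), μ {x | F x - m > r} ≤ ENNReal.ofReal (a₁ * Real.exp (-a₂ * r ^ 2)) :=
  stmt6_general x₀ μ κ hκ hint
end

section
/- Let μ be a Borel probability measure on ℝⁿ satisfying the quadratic transportation cost inequality a₀ · T₂(ν, μ) ≤ H(ν | μ) for all probabilities ν on ℝⁿ, where T₂ is the transportation cost with cost |x - y|² and a₀ > 0. Then μ satisfies the Poincaré (spectral gap) inequality: 2a₀ · Var_μ(f) ≤ ∫ |∇f|² dμ for all smooth compactly supported f : ℝⁿ → ℝ. -/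
open MeasureTheory ENNReal

open NNReal


lemma entropy_ptwise {δ : ℝ} (hδ0 : 0 ≤ δ) (hδ1 : δ < 1) {u : ℝ} (hu : |u| ≤ δ) :
    (1 + u) * Real.log (1 + u) ≤ u + u ^ 2 / (2 * (1 - δ)) := by
  have h1δ : (0:ℝ) < 1 - δ := by linarith
  set ψ : ℝ → ℝ := fun u => u + u ^ 2 / (2 * (1 - δ)) - (1 + u) * Real.log (1 + u) with hψ
  suffices h : 0 ≤ ψ u by simpa [hψ] using h
  have habs := abs_le.1 hu
  have hder : ∀ v : ℝ, v ∈ Set.Ioo (-(1:ℝ)) 1 →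
      HasDerivAt ψ (v / (1 - δ) - Real.log (1 + v)) v := by
    intro v hv
    have hv1 : (0:ℝ) < 1 + v := by linarith [hv.1]
    have h1 : HasDerivAt (fun w : ℝ => 1 + w) 1 v := by
      simpa using (hasDerivAt_id v).const_add 1
    have hlog : HasDerivAt (fun w : ℝ => Real.log (1 + w)) (1 / (1 + v)) v := by
      simpa using h1.log hv1.ne'
    have hmul : HasDerivAt (fun w : ℝ => (1 + w) * Real.log (1 + w))
        (1 * Real.log (1 + v) + (1 + v) * (1 / (1 + v))) v := h1.mul hlog
    have hsq : HasDerivAt (fun w : ℝ => w + w ^ 2 / (2 * (1 - δ)))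
        (1 + 2 * v / (2 * (1 - δ))) v := by
      have := ((hasDerivAt_pow 2 v).div_const (2 * (1 - δ))).const_add 0
      exact ((hasDerivAt_id' v).add ((hasDerivAt_pow 2 v).div_const (2 * (1 - δ)))).congr_deriv
        (by norm_num)
    have := hsq.sub hmul
    refine this.congr_deriv ?_
    rw [mul_one_div_cancel hv1.ne', mul_div_mul_left _ _ (two_ne_zero)]
    ring
  have hcont : ContinuousOn ψ (Set.Icc (-δ) δ) := by
    have : ∀ v ∈ Set.Icc (-δ) δ, (0:ℝ) < 1 + v := fun v hv => by linarith [hv.1]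
    refine ContinuousOn.sub (by fun_prop) ?_
    exact ContinuousOn.mul (by fun_prop) (ContinuousOn.log (by fun_prop)
      (fun v hv => (this v hv).ne'))
  have hsub : Set.Icc (-δ) δ ⊆ Set.Ioo (-1:ℝ) 1 := fun v hv =>
    ⟨by linarith [hv.1], by linarith [hv.2]⟩
  have hψ0 : ψ 0 = 0 := by simp [hψ]
  rcases le_or_gt 0 u with hu0 | hu0
  · have hmono : MonotoneOn ψ (Set.Icc 0 δ) := by
      apply monotoneOn_of_deriv_nonneg (convex_Icc _ _)
        (hcont.mono (Set.Icc_subset_Icc (by linarith) le_rfl))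
      · intro v hv
        rw [interior_Icc] at hv
        exact ((hder v (hsub ⟨by linarith [hv.1], le_of_lt hv.2⟩)).differentiableAt).differentiableWithinAt
      · intro v hv
        rw [interior_Icc] at hv
        rw [(hder v (hsub ⟨by linarith [hv.1], le_of_lt hv.2⟩)).deriv]
        have hlog : Real.log (1 + v) ≤ v := by
          have := Real.log_le_sub_one_of_pos (x := 1 + v) (by linarith [hv.1])
          linarith
        have : v ≤ v / (1 - δ) := by
          rw [le_div_iff₀ h1δ]; nlinarith [hv.1.le]
        linarith
    have := hmono (Set.mem_Icc.2 ⟨le_rfl, hδ0⟩) (Set.mem_Icc.2 ⟨hu0, habs.2⟩) hu0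
    rwa [hψ0] at this
  · have hanti : AntitoneOn ψ (Set.Icc (-δ) 0) := by
      apply antitoneOn_of_deriv_nonpos (convex_Icc _ _)
        (hcont.mono (Set.Icc_subset_Icc le_rfl hδ0))
      · intro v hv
        rw [interior_Icc] at hv
        exact ((hder v (hsub ⟨le_of_lt hv.1, by linarith [hv.2]⟩)).differentiableAt).differentiableWithinAt
      · intro v hv
        rw [interior_Icc] at hv
        rw [(hder v (hsub ⟨le_of_lt hv.1, by linarith [hv.2]⟩)).deriv]
        have hv1 : (0:ℝ) < 1 + v := by linarith [hv.1]
        have hlog : v / (1 + v) ≤ Real.log (1 + v) := by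
          have := Real.one_sub_inv_le_log_of_pos hv1
          have hinv : 1 - (1 + v)⁻¹ = v / (1 + v) := by field_simp; ring
          linarith [hinv ▸ this]
        have : v / (1 - δ) ≤ v / (1 + v) := by
          rw [div_le_div_iff₀ h1δ hv1]; nlinarith [hv.1, hv.2.le]
        linarith
    have := hanti (Set.mem_Icc.2 ⟨habs.1, hu0.le⟩) (Set.mem_Icc.2 ⟨by linarith, le_rfl⟩) hu0.le
    rwa [hψ0] at this

lemma int_of_bound {α : Type*} [MeasurableSpace α] (ρ : Measure α) [IsFiniteMeasure ρ]
    (g : α → ℝ) (hg : AEStronglyMeasurable g ρ) (c : ℝ) (hc : ∀ x, |g x| ≤ c) :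
    Integrable g ρ :=
  Integrable.mono' (integrable_const c) hg
    (Filter.Eventually.of_forall (fun x => by simpa [Real.norm_eq_abs] using hc x))


lemma taylor_bound {E : Type*} [NormedAddCommGroup E] [NormedSpace ℝ E]
    (f : E → ℝ) (hf : ContDiff ℝ (⊤ : ℕ∞) f) (M : ℝ≥0)
    (hM : LipschitzWith M (fderiv ℝ f)) (x y : E) :
    f x - f y ≤ ‖fderiv ℝ f y‖ * ‖x - y‖ + M * ‖x - y‖ ^ 2 := by
  set φ := fderiv ℝ f y with hφ
  have hdiff : Differentiable ℝ f := hf.differentiable (by simp)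
  have hseg : ∀ z ∈ segment ℝ y x, ‖z - y‖ ≤ ‖x - y‖ := by
    rintro z ⟨a, b, ha, hb, hab, rfl⟩
    have : a • y + b • x - y = b • (x - y) := by
      rw [smul_sub]
      have : a • y = (1 - b) • y := by rw [← hab]; ring_nf
      rw [this, sub_smul, one_smul]; abel
    rw [this, norm_smul]
    have hb1 : b ≤ 1 := by linarith
    calc ‖b‖ * ‖x - y‖ ≤ 1 * ‖x - y‖ := by
          apply mul_le_mul_of_nonneg_right _ (norm_nonneg _)
          rw [Real.norm_eq_abs, abs_of_nonneg hb]; exact hb1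
      _ = ‖x - y‖ := one_mul _
  have key : ‖f x - f y - φ (x - y)‖ ≤ (M * ‖x - y‖) * ‖x - y‖ := by
    apply (convex_segment y x).norm_image_sub_le_of_norm_hasFDerivWithin_le'
      (fun z _ => (hdiff z).hasFDerivAt.hasFDerivWithinAt)
      (fun z hz => ?_) (left_mem_segment ℝ y x) (right_mem_segment ℝ y x)
    calc ‖fderiv ℝ f z - φ‖ ≤ M * ‖z - y‖ := by
          simpa [dist_eq_norm] using hM.dist_le_mul z y
      _ ≤ M * ‖x - y‖ := by
          exact mul_le_mul_of_nonneg_left (hseg z hz) M.coe_nonneg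
  have h1 : f x - f y - φ (x - y) ≤ M * ‖x - y‖ ^ 2 := by
    have h := (le_abs_self (f x - f y - φ (x - y))).trans
      ((Real.norm_eq_abs _ ▸ key : |f x - f y - φ (x - y)| ≤ _))
    nlinarith [h]
  have h2 : φ (x - y) ≤ ‖φ‖ * ‖x - y‖ :=
    (le_abs_self _).trans ((φ.le_opNorm (x - y)).trans_eq' (Real.norm_eq_abs _).symm)
  linarith

section Key

variable {n : ℕ}

local notation "E" => EuclideanSpace ℝ (Fin n)

set_option maxHeartbeats 2000000 in
lemma key_step (μ : Measure E) [IsProbabilityMeasure μ]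
    (a₀ : ℝ) (ha₀ : 0 < a₀)
    (hTCI : ∀ ν : Measure E, IsProbabilityMeasure ν →
      ENNReal.ofReal a₀
          * transportCost (fun p => ENNReal.ofReal (‖p.1 - p.2‖ ^ 2)) ν μ ≤ relEnt ν μ)
    (f : E → ℝ) (hf : ContDiff ℝ (⊤ : ℕ∞) f) (hfc : HasCompactSupport f)
    (K : ℝ) (hK0 : 0 ≤ K) (hK : ∀ x, |f x - ∫ y, f y ∂μ| ≤ K)
    (M : ℝ≥0) (hM : LipschitzWith M (fderiv ℝ f))
    (ε : ℝ) (hε : 0 < ε) (hεK : ε * K ≤ 1/2) :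
    (∫ x, (f x - ∫ y, f y ∂μ) ^ 2 ∂μ) ≤
      Real.sqrt (∫ x, ‖gradient f x‖ ^ 2 ∂μ) *
        Real.sqrt ((∫ x, (f x - ∫ y, f y ∂μ) ^ 2 ∂μ) / (2 * (1 - ε * K)) / a₀ + ε)
      + M * ε * ((∫ x, (f x - ∫ y, f y ∂μ) ^ 2 ∂μ) / (2 * (1 - ε * K)) / a₀ + ε) := by
  set m := ∫ y, f y ∂μ with hm
  set F : E → ℝ := fun x => f x - m with hF
  set V := ∫ x, (F x) ^ 2 ∂μ with hV
  set G2 := ∫ x, ‖gradient f x‖ ^ 2 ∂μ with hG2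
  have hεK' : (0:ℝ) < 1 - ε * K := by linarith
  have hfcont : Continuous f := hf.continuous
  have hFcont : Continuous F := hfcont.sub continuous_const
  have hFmeas : Measurable F := hFcont.measurable
  -- gradient facts
  have hgrad_norm : ∀ x, ‖gradient f x‖ = ‖fderiv ℝ f x‖ := fun x =>
    LinearIsometryEquiv.norm_map _ _
  have hfderiv_cont : Continuous (fderiv ℝ f) := hf.continuous_fderiv (by simp)
  obtain ⟨Cg, hCg⟩ : ∃ C, ∀ x, ‖fderiv ℝ f x‖ ≤ C :=
    (hfc.fderiv ℝ).exists_bound_of_continuous hfderiv_cont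
  have hCg0 : 0 ≤ Cg := le_trans (norm_nonneg _) (hCg 0)
  -- integrability over probability measures of bounded measurable functions
  have hVnonneg : 0 ≤ V := integral_nonneg (fun x => sq_nonneg _)
  have hG2nonneg : 0 ≤ G2 := integral_nonneg (fun x => sq_nonneg _)
  -- the tilted measure
  set dens : E → ℝ := fun x => 1 + ε * F x with hdens
  have habsF : ∀ x, |F x| ≤ K := hK
  have hdens_nonneg : ∀ x, 0 ≤ dens x := by
    intro x
    have h := abs_le.1 (habsF x)
    have h1 : -(ε * K) ≤ ε * F x := by nlinarith [h.1, hε.le]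
    simp only [hdens]
    linarith
  have hdens_le : ∀ x, dens x ≤ 1 + ε * K := by
    intro x
    have h := (abs_le.1 (habsF x)).2
    have : ε * F x ≤ ε * K := mul_le_mul_of_nonneg_left h hε.le
    simp only [hdens]; linarith
  have hdens_cont : Continuous dens := by fun_prop
  have hdens_meas : Measurable (fun x => ENNReal.ofReal (dens x)) :=
    ENNReal.measurable_ofReal.comp hdens_cont.measurable
  set ν : Measure E := μ.withDensity (fun x => ENNReal.ofReal (dens x)) with hν
  -- integrability lemmas
  have hint_of_bound : ∀ (g : E → ℝ), Measurable g → (∃ c, ∀ x, |g x| ≤ c) → Integrable g μ := by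
    rintro g hg ⟨c, hc⟩
    exact Integrable.mono' (integrable_const c) hg.aestronglyMeasurable
      (Filter.Eventually.of_forall (fun x => by simpa [Real.norm_eq_abs] using hc x))
  have hintf : Integrable f μ := hfcont.integrable_of_hasCompactSupport hfc
  have hintF : Integrable F μ := hintf.sub (integrable_const m)
  have hintF0 : ∫ x, F x ∂μ = 0 := by
    rw [hF]
    rw [integral_sub hintf (integrable_const m)]
    simp [hm]
  have hintF2 : Integrable (fun x => (F x) ^ 2) μ :=
    hint_of_bound _ (hFmeas.pow_const 2) ⟨K ^ 2, fun x => by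
      rw [abs_pow]
      have : |F x| ^ 2 ≤ K ^ 2 := by
        apply pow_le_pow_left₀ (abs_nonneg _) (hK x)
      simpa using this⟩
  have hdens_int : Integrable dens μ := (integrable_const 1).add (hintF.const_mul ε)
  have hdens_integral : ∫ x, dens x ∂μ = 1 := by
    rw [hdens]
    rw [integral_add (integrable_const 1) (hintF.const_mul ε)]
    rw [integral_const_mul, hintF0, mul_zero, add_zero]
    exact integral_const 1 |>.trans (by simp)
  have hνprob : IsProbabilityMeasure ν := by
    constructor
    rw [hν, withDensity_apply _ MeasurableSet.univ, Measure.restrict_univ,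
      ← ofReal_integral_eq_lintegral_ofReal hdens_int
        (Filter.Eventually.of_forall hdens_nonneg), hdens_integral]
    simp
  have hν_ac : ν ≪ μ := withDensity_absolutelyContinuous μ _
  -- entropy bound
  set c : ℝ := 1 / (2 * (1 - ε * K)) with hc
  have hc0 : 0 < c := by positivity
  have hEnt : relEnt ν μ ≤ ENNReal.ofReal (ε ^ 2 * V * c) := by
    rw [relEnt, if_pos hν_ac]
    apply ENNReal.ofReal_le_ofReal
    -- rewrite the integrand a.e.
    have hrn : (fun x => Real.log ((ν.rnDeriv μ x).toReal)) =ᵐ[ν]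
        (fun x => Real.log (dens x)) := by
      have h0 : ν.rnDeriv μ =ᵐ[μ] fun x => ENNReal.ofReal (dens x) :=
        Measure.rnDeriv_withDensity μ hdens_meas
      have h1 : ν.rnDeriv μ =ᵐ[ν] fun x => ENNReal.ofReal (dens x) := hν_ac.ae_le h0
      filter_upwards [h1] with x hx
      rw [hx, ENNReal.toReal_ofReal (hdens_nonneg x)]
    rw [integral_congr_ae hrn]
    -- transfer to μ
    have hwd : ∫ x, Real.log (dens x) ∂ν = ∫ x, dens x * Real.log (dens x) ∂μ := by
      have : ν = μ.withDensity (fun x => ((dens x).toNNReal : ℝ≥0∞)) := by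
        simp only [hν, ENNReal.ofReal]
      rw [this, integral_withDensity_eq_integral_smul
        (by exact hdens_cont.measurable.real_toNNReal)]
      congr 1
      ext x
      rw [NNReal.smul_def, Real.coe_toNNReal _ (hdens_nonneg x), smul_eq_mul]
    rw [hwd]
    -- pointwise entropy bound
    have hpt : ∀ x, dens x * Real.log (dens x) ≤ ε * F x + (ε * F x) ^ 2 * c := by
      intro x
      have h := entropy_ptwise (δ := ε * K) (by positivity) (by linarith)
        (u := ε * F x) (by
          rw [abs_mul, abs_of_pos hε]
          exact mul_le_mul_of_nonneg_left (habsF x) hε.le)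
      calc dens x * Real.log (dens x) = (1 + ε * F x) * Real.log (1 + ε * F x) := rfl
        _ ≤ ε * F x + (ε * F x) ^ 2 / (2 * (1 - ε * K)) := h
        _ = ε * F x + (ε * F x) ^ 2 * c := by rw [hc]; ring
    -- lower pointwise bound for integrability
    have hpt' : ∀ x, ε * F x ≤ dens x * Real.log (dens x) := by
      intro x
      rcases eq_or_lt_of_le (hdens_nonneg x) with h0 | h0
      · exfalso
        have hd0 : dens x = 0 := h0.symm
        have h1 : ε * F x = -1 := by simp only [hdens] at hd0; linarith
        have habs : |ε * F x| ≤ ε * K := by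
          rw [abs_mul, abs_of_pos hε]
          exact mul_le_mul_of_nonneg_left (habsF x) hε.le
        rw [h1] at habs
        have := (abs_le.1 habs).1
        simp at this
        linarith
      · have hlog := Real.one_sub_inv_le_log_of_pos h0
        have : dens x * (1 - (dens x)⁻¹) ≤ dens x * Real.log (dens x) :=
          mul_le_mul_of_nonneg_left hlog (hdens_nonneg x)
        have heq : dens x * (1 - (dens x)⁻¹) = dens x - 1 := by
          field_simp
        have : dens x - 1 ≤ dens x * Real.log (dens x) := by rw [← heq]; exact this
        simp only [hdens] at this ⊢
        linarith
    have hmeas_ent : Measurable (fun x => dens x * Real.log (dens x)) :=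
      hdens_cont.measurable.mul (Real.measurable_log.comp hdens_cont.measurable)
    have hint_ent : Integrable (fun x => dens x * Real.log (dens x)) μ := by
      apply hint_of_bound _ hmeas_ent
      refine ⟨ε * K + (ε * K) ^ 2 * c, fun x => ?_⟩
      have h1 := hpt x
      have h2 := hpt' x
      have habs : |ε * F x| ≤ ε * K := by
        rw [abs_mul, abs_of_pos hε]
        exact mul_le_mul_of_nonneg_left (habsF x) hε.le
      have h3 := abs_le.1 habs
      rw [abs_le]
      constructor
      · nlinarith
      · nlinarith [sq_nonneg (ε * F x), sq_abs (ε * F x), sq_le_sq' h3.1 h3.2]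
    have hint_rhs : Integrable (fun x => ε * F x + (ε * F x) ^ 2 * c) μ := by
      have h1 : Integrable (fun x => ε * F x) μ := hintF.const_mul ε
      have h2 : Integrable (fun x => (ε * F x) ^ 2 * c) μ := by
        have : (fun x => (ε * F x) ^ 2 * c) = fun x => (ε ^ 2 * c) * F x ^ 2 := by
          ext x; ring
        rw [this]
        exact hintF2.const_mul _
      exact h1.add h2
    calc ∫ x, dens x * Real.log (dens x) ∂μ
        ≤ ∫ x, (ε * F x + (ε * F x) ^ 2 * c) ∂μ :=
          integral_mono hint_ent hint_rhs hpt
      _ = ε ^ 2 * V * c := by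
          rw [integral_add (hintF.const_mul ε) (by
            have : (fun x => (ε * F x) ^ 2 * c) = fun x => (ε ^ 2 * c) * F x ^ 2 := by
              ext x; ring
            rw [this]; exact hintF2.const_mul _)]
          rw [integral_const_mul, hintF0, mul_zero, zero_add]
          have : (fun x => (ε * F x) ^ 2 * c) = fun x => (ε ^ 2 * c) * F x ^ 2 := by
            ext x; ring
          rw [this, integral_const_mul, ← hV]
          ring
  -- transportation cost bound
  have hTbound : transportCost (fun p => ENNReal.ofReal (‖p.1 - p.2‖ ^ 2)) ν μ ≤
      ENNReal.ofReal (ε ^ 2 * V * c / a₀) := by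
    have h := (hTCI ν hνprob).trans hEnt
    rw [← ENNReal.mul_le_mul_iff_right (a := ENNReal.ofReal a₀)
      (by simp [ENNReal.ofReal_eq_zero]; linarith) ENNReal.ofReal_ne_top]
    refine h.trans ?_
    rw [← ENNReal.ofReal_mul ha₀.le]
    apply ENNReal.ofReal_le_ofReal
    apply le_of_eq
    field_simp
  -- extract a near-optimal coupling
  set Rε : ℝ := ε ^ 2 * V * c / a₀ + ε ^ 3 with hRε
  have hRεpos : 0 < Rε := by positivity
  have hTlt : transportCost (fun p => ENNReal.ofReal (‖p.1 - p.2‖ ^ 2)) ν μ <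
      ENNReal.ofReal Rε := by
    refine hTbound.trans_lt ?_
    rw [ENNReal.ofReal_lt_ofReal_iff hRεpos]
    have : 0 < ε ^ 3 := by positivity
    rw [hRε]; linarith
  rw [transportCost] at hTlt
  obtain ⟨π, hπ⟩ := iInf_lt_iff.mp hTlt
  obtain ⟨⟨hπfst, hπsnd⟩, hπcost⟩ := iInf_lt_iff.mp hπ
  have hπprob : IsProbabilityMeasure π := by
    constructor
    rw [← Measure.fst_univ, hπfst]
    exact measure_univ
  -- the cost function
  set q : E × E → ℝ := fun p => ‖p.1 - p.2‖ ^ 2 with hq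
  have hq_cont : Continuous q := ((continuous_fst.sub continuous_snd).norm.pow 2)
  have hq_nonneg : ∀ p, 0 ≤ q p := fun p => sq_nonneg _
  have hq_int : Integrable q π := by
    have h1 := integrable_toReal_of_lintegral_ne_top
      (f := fun p => ENNReal.ofReal (q p))
      (ENNReal.measurable_ofReal.comp hq_cont.measurable).aemeasurable (hπcost.trans ENNReal.ofReal_lt_top).ne
    have h2 : (fun p => (ENNReal.ofReal (q p)).toReal) = q :=
      funext fun p => ENNReal.toReal_ofReal (hq_nonneg p)
    rwa [h2] at h1
  set C : ℝ := ∫ p, q p ∂π with hC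
  have hC_nonneg : 0 ≤ C := integral_nonneg hq_nonneg
  have hC_le : C ≤ Rε := by
    have h := ofReal_integral_eq_lintegral_ofReal hq_int
      (Filter.Eventually.of_forall hq_nonneg)
    have h2 : ENNReal.ofReal C ≤ ENNReal.ofReal Rε := by
      rw [hC, h]; exact hπcost.le
    exact (ENNReal.ofReal_le_ofReal_iff hRεpos.le).1 h2
  -- marginal identities
  obtain ⟨Cf, hCf⟩ : ∃ Cb, ∀ x, ‖f x‖ ≤ Cb := hfc.exists_bound_of_continuous hfcont
  have h1 : ∫ x, f x ∂ν = ∫ p, f p.1 ∂π := by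
    rw [← hπfst]
    exact integral_map measurable_fst.aemeasurable hfcont.aestronglyMeasurable
  have h2 : ∫ x, f x ∂μ = ∫ p, f p.2 ∂π := by
    rw [← hπsnd]
    exact integral_map measurable_snd.aemeasurable hfcont.aestronglyMeasurable
  have hνf : ∫ x, f x ∂ν = m + ε * V := by
    have hν' : ν = μ.withDensity (fun x => ((dens x).toNNReal : ℝ≥0∞)) := by
      simp only [hν, ENNReal.ofReal]
    rw [hν', integral_withDensity_eq_integral_smul (hdens_cont.measurable.real_toNNReal)]
    have hsm : (fun x => (dens x).toNNReal • f x) = fun x => dens x * f x :=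
      funext fun x => by
        rw [NNReal.smul_def, Real.coe_toNNReal _ (hdens_nonneg x), smul_eq_mul]
    rw [hsm]
    have hexp : (fun x => dens x * f x) = fun x => f x + ε * (F x) ^ 2 + (ε * m) * F x :=
      funext fun x => by simp only [hdens, hF]; ring
    have hA : Integrable (fun x => f x + ε * F x ^ 2) μ := hintf.add (hintF2.const_mul ε)
    have hB : Integrable (fun x => ε * m * F x) μ := hintF.const_mul _
    rw [hexp, integral_add hA hB, integral_add hintf (hintF2.const_mul ε),
      integral_const_mul, integral_const_mul, hintF0, ← hV, ← hm]
    ring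
  have hb1 : Integrable (fun p => f p.1) π :=
    int_of_bound π _ (hfcont.comp continuous_fst).aestronglyMeasurable Cf
      (fun p => by simpa [Real.norm_eq_abs] using hCf p.1)
  have hb2 : Integrable (fun p => f p.2) π :=
    int_of_bound π _ (hfcont.comp continuous_snd).aestronglyMeasurable Cf
      (fun p => by simpa [Real.norm_eq_abs] using hCf p.2)
  have hsub : ∫ p, (f p.1 - f p.2) ∂π = ε * V := by
    rw [integral_sub hb1 hb2, ← h1, ← h2, hνf]; ring
  -- Taylor bound pointwise
  have hptw : ∀ p : E × E, f p.1 - f p.2 ≤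
      ‖fderiv ℝ f p.2‖ * ‖p.1 - p.2‖ + M * q p := fun p =>
    taylor_bound f hf M hM p.1 p.2
  set g1 : E × E → ℝ := fun p => ‖fderiv ℝ f p.2‖ * ‖p.1 - p.2‖ with hg1
  have hg1_cont : Continuous g1 :=
    ((hfderiv_cont.comp continuous_snd).norm).mul (continuous_fst.sub continuous_snd).norm
  have hg1_nonneg : ∀ p, 0 ≤ g1 p := fun p => mul_nonneg (norm_nonneg _) (norm_nonneg _)
  have hg1_int : Integrable g1 π := by
    apply Integrable.mono' (((integrable_const (1:ℝ)).add hq_int).const_mul Cg)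
      hg1_cont.aestronglyMeasurable
    apply Filter.Eventually.of_forall
    intro p
    rw [Real.norm_eq_abs, abs_of_nonneg (hg1_nonneg p)]
    have h01 : ‖fderiv ℝ f p.2‖ * ‖p.1 - p.2‖ ≤ Cg * ‖p.1 - p.2‖ :=
      mul_le_mul_of_nonneg_right (hCg p.2) (norm_nonneg _)
    have h02 : ‖p.1 - p.2‖ ≤ 1 + q p := by
      have := sq_nonneg (‖p.1 - p.2‖ - 1)
      simp only [hq]; nlinarith
    calc g1 p ≤ Cg * ‖p.1 - p.2‖ := h01
      _ ≤ Cg * (1 + q p) := mul_le_mul_of_nonneg_left h02 hCg0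
  have hrhs_int : Integrable (fun p => g1 p + (M : ℝ) * q p) π :=
    hg1_int.add (hq_int.const_mul _)
  have hstep : ε * V ≤ ∫ p, g1 p ∂π + M * C := by
    have hmono := integral_mono (hb1.sub hb2) hrhs_int hptw
    simp only [Pi.sub_apply] at hmono
    rw [hsub] at hmono
    rwa [integral_add hg1_int (hq_int.const_mul _), integral_const_mul, ← hC] at hmono
  -- Cauchy–Schwarz
  set u : E × E → ℝ := fun p => ‖fderiv ℝ f p.2‖ with hu
  set v : E × E → ℝ := fun p => ‖p.1 - p.2‖ with hv
  have hu_cont : Continuous u := (hfderiv_cont.comp continuous_snd).norm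
  have hv_cont : Continuous v := (continuous_fst.sub continuous_snd).norm
  have hu2_int : Integrable (fun p => u p ^ 2) π := by
    apply int_of_bound π _ ((hu_cont.pow 2).aestronglyMeasurable) (Cg ^ 2)
    intro p
    rw [abs_of_nonneg (sq_nonneg _)]
    exact pow_le_pow_left₀ (norm_nonneg _) (hCg p.2) 2
  have hv2_int : Integrable (fun p => v p ^ 2) π := hq_int
  have h2eq : (ENNReal.ofReal 2) = (2 : ℝ≥0∞) := by norm_num
  have hu_mem : MemLp u (ENNReal.ofReal 2) π := by
    rw [h2eq]
    exact (memLp_two_iff_integrable_sq hu_cont.aestronglyMeasurable).2 hu2_int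
  have hv_mem : MemLp v (ENNReal.ofReal 2) π := by
    rw [h2eq]
    exact (memLp_two_iff_integrable_sq hv_cont.aestronglyMeasurable).2 hv2_int
  have hconj : Real.HolderConjugate 2 2 := Real.HolderConjugate.two_two
  have hCS := integral_mul_le_Lp_mul_Lq_of_nonneg hconj
    (Filter.Eventually.of_forall (fun p => norm_nonneg _))
    (Filter.Eventually.of_forall (fun p => norm_nonneg _)) hu_mem hv_mem
  have hrpow : ∀ w : E × E → ℝ, ∫ p, w p ^ (2:ℝ) ∂π = ∫ p, w p ^ 2 ∂π := by
    intro w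
    apply integral_congr_ae
    apply Filter.Eventually.of_forall
    intro p
    simp [Real.rpow_two]
  rw [hrpow u, hrpow v] at hCS
  have hint_u2_nonneg : 0 ≤ ∫ p, u p ^ 2 ∂π := integral_nonneg (fun p => sq_nonneg _)
  have hint_v2_nonneg : 0 ≤ ∫ p, v p ^ 2 ∂π := integral_nonneg (fun p => sq_nonneg _)
  rw [← Real.sqrt_eq_rpow, ← Real.sqrt_eq_rpow] at hCS
  -- identify the integrals
  have hsnd2 : ∫ p, u p ^ 2 ∂π = ∫ x, ‖fderiv ℝ f x‖ ^ 2 ∂μ := by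
    rw [← hπsnd]
    exact (integral_map measurable_snd.aemeasurable
      ((hfderiv_cont.norm.pow 2).aestronglyMeasurable)).symm
  have hG2' : ∫ x, ‖fderiv ℝ f x‖ ^ 2 ∂μ = G2 := by
    rw [hG2]
    exact integral_congr_ae (Filter.Eventually.of_forall (fun x => by simp [hgrad_norm x]))
  have hv2C : ∫ p, v p ^ 2 ∂π = C := rfl
  rw [hsnd2, hG2', hv2C] at hCS
  have hg1CS : ∫ p, g1 p ∂π ≤ Real.sqrt G2 * Real.sqrt C := hCS
  -- put everything together
  have hεV : ε * V ≤ Real.sqrt G2 * Real.sqrt C + M * C := by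
    have := add_le_add_right hg1CS ((M:ℝ) * C)
    linarith [hstep]
  set B : ℝ := V * c / a₀ + ε with hB'
  have hBpos : 0 < B := by positivity
  have hRεfact : Rε = ε ^ 2 * B := by rw [hRε, hB']; ring
  have hsqrtRε : Real.sqrt Rε = ε * Real.sqrt B := by
    rw [hRεfact, Real.sqrt_mul (sq_nonneg ε), Real.sqrt_sq hε.le]
  have hsqrtG2 : 0 ≤ Real.sqrt G2 := Real.sqrt_nonneg _
  have hfinal1 : ε * V ≤ Real.sqrt G2 * Real.sqrt Rε + M * Rε := by
    have h1 : Real.sqrt G2 * Real.sqrt C ≤ Real.sqrt G2 * Real.sqrt Rε :=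
      mul_le_mul_of_nonneg_left (Real.sqrt_le_sqrt hC_le) hsqrtG2
    have h2 : (M:ℝ) * C ≤ M * Rε := mul_le_mul_of_nonneg_left hC_le M.coe_nonneg
    linarith [hεV]
  have hfactor : Real.sqrt G2 * Real.sqrt Rε + M * Rε =
      ε * (Real.sqrt G2 * Real.sqrt B + M * ε * B) := by
    rw [hsqrtRε, hRεfact]; ring
  rw [hfactor] at hfinal1
  have hVle : V ≤ Real.sqrt G2 * Real.sqrt B + M * ε * B :=
    le_of_mul_le_mul_left hfinal1 hε
  have hBeq : B = V / (2 * (1 - ε * K)) / a₀ + ε := by rw [hB', hc]; ring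
  rw [hBeq] at hVle
  exact hVle

end Key

set_option maxHeartbeats 1000000 in
/-- Otto–Villani: a quadratic transportation cost inequality on `ℝⁿ` implies
the Poincaré (spectral gap) inequality. -/
theorem stmt7 (n : ℕ) (μ : Measure (EuclideanSpace ℝ (Fin n))) [IsProbabilityMeasure μ]
    (a₀ : ℝ) (ha₀ : 0 < a₀)
    (hTCI : ∀ ν : Measure (EuclideanSpace ℝ (Fin n)), IsProbabilityMeasure ν →
      ENNReal.ofReal a₀
          * transportCost (fun p => ENNReal.ofReal (‖p.1 - p.2‖ ^ 2)) ν μ ≤ relEnt ν μ)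
    (f : EuclideanSpace ℝ (Fin n) → ℝ) (hf : ContDiff ℝ (⊤ : ℕ∞) f) (hfc : HasCompactSupport f) :
    2 * a₀ * ∫ x, (f x - ∫ y, f y ∂μ) ^ 2 ∂μ ≤ ∫ x, ‖gradient f x‖ ^ 2 ∂μ := by
  have hfcont : Continuous f := hf.continuous
  have hintf : Integrable f μ := hfcont.integrable_of_hasCompactSupport hfc
  obtain ⟨Cf, hCf⟩ : ∃ Cb, ∀ x, ‖f x‖ ≤ Cb := hfc.exists_bound_of_continuous hfcont
  have hCf0 : 0 ≤ Cf := le_trans (norm_nonneg _) (hCf 0)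
  have hm_le : |∫ y, f y ∂μ| ≤ Cf := by
    calc |∫ y, f y ∂μ| ≤ ∫ y, |f y| ∂μ := by
          simpa [Real.norm_eq_abs] using norm_integral_le_integral_norm (μ := μ) f
      _ ≤ ∫ _, Cf ∂μ := integral_mono hintf.abs (integrable_const Cf)
          (fun y => by simpa [Real.norm_eq_abs] using hCf y)
      _ = Cf := by simp
  set K : ℝ := 2 * Cf with hKdef
  have hK0 : 0 ≤ K := by positivity
  have hK : ∀ x, |f x - ∫ y, f y ∂μ| ≤ K := by
    intro x
    calc |f x - ∫ y, f y ∂μ| ≤ |f x| + |∫ y, f y ∂μ| := abs_sub _ _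
      _ ≤ Cf + Cf := add_le_add (by simpa [Real.norm_eq_abs] using hCf x) hm_le
      _ = K := by rw [hKdef]; ring
  obtain ⟨M, hM⟩ : ∃ M : ℝ≥0, LipschitzWith M (fderiv ℝ f) :=
    ContDiff.lipschitzWith_of_hasCompactSupport (hfc.fderiv ℝ)
      (hf.fderiv_right (m := 1) (WithTop.coe_le_coe.2 le_top)) one_ne_zero
  set V : ℝ := ∫ x, (f x - ∫ y, f y ∂μ) ^ 2 ∂μ with hVdef
  set G2 : ℝ := ∫ x, ‖gradient f x‖ ^ 2 ∂μ with hG2def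
  have hVnonneg : 0 ≤ V := integral_nonneg (fun x => sq_nonneg _)
  have hG2nonneg : 0 ≤ G2 := integral_nonneg (fun x => sq_nonneg _)
  rcases eq_or_lt_of_le hVnonneg with hV0 | hVpos
  · rw [← hV0]; simpa using hG2nonneg
  -- the per-ε inequality
  set g : ℝ → ℝ := fun ε => Real.sqrt G2 * Real.sqrt (V / (2 * (1 - ε * K)) / a₀ + ε)
      + M * ε * (V / (2 * (1 - ε * K)) / a₀ + ε) with hgdef
  have key : ∀ ε : ℝ, 0 < ε → ε * K ≤ 1 / 2 → V ≤ g ε := by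
    intro ε hε hεK
    exact key_step μ a₀ ha₀ hTCI f hf hfc K hK0 hK M hM ε hε hεK
  -- limit as ε → 0⁺
  set ε₀ : ℝ := 1 / (2 * (K + 1)) with hε₀def
  have hε₀pos : 0 < ε₀ := by positivity
  have hεprop : ∀ ε ∈ Set.Ioc (0:ℝ) ε₀, ε * K ≤ 1 / 2 := by
    intro ε hε
    have h1 : ε ≤ ε₀ := hε.2
    have h2 : ε * K ≤ ε₀ * K := mul_le_mul_of_nonneg_right h1 hK0
    have h3 : ε₀ * K ≤ 1 / 2 := by
      rw [hε₀def, div_mul_eq_mul_div, one_mul, div_le_div_iff₀ (by positivity) (by norm_num)]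
      nlinarith
    linarith
  have hcont0 : ContinuousAt (fun ε : ℝ => V / (2 * (1 - ε * K)) / a₀ + ε) 0 := by
    have hden : ContinuousAt (fun ε : ℝ => 2 * (1 - ε * K)) 0 := by fun_prop
    have hne : (2 : ℝ) * (1 - 0 * K) ≠ 0 := by norm_num
    exact ((continuousAt_const.div hden hne).div_const a₀).add continuousAt_id
  have hgcont : ContinuousAt g 0 := by
    rw [hgdef]
    exact (continuousAt_const.mul (Real.continuous_sqrt.continuousAt.comp hcont0)).add
      ((continuousAt_const.mul continuousAt_id).mul hcont0)
  have hlim : Filter.Tendsto g (nhdsWithin 0 (Set.Ioi 0)) (nhds (g 0)) :=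
    hgcont.tendsto.mono_left nhdsWithin_le_nhds
  have hev : ∀ᶠ ε in nhdsWithin (0:ℝ) (Set.Ioi 0), V ≤ g ε := by
    filter_upwards [Ioc_mem_nhdsGT_of_mem (Set.mem_Ico.2 ⟨le_rfl, hε₀pos⟩)] with ε hε
    exact key ε hε.1 (hεprop ε hε)
  have hVg0 : V ≤ g 0 := ge_of_tendsto hlim hev
  have hg0 : g 0 = Real.sqrt G2 * Real.sqrt (V / (2 * a₀)) := by
    rw [hgdef]
    norm_num [div_div]
  rw [hg0] at hVg0
  have harg0 : 0 ≤ V / (2 * a₀) := by positivity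
  have hsq : V ^ 2 ≤ G2 * (V / (2 * a₀)) := by
    calc V ^ 2 ≤ (Real.sqrt G2 * Real.sqrt (V / (2 * a₀))) ^ 2 :=
          pow_le_pow_left₀ hVnonneg hVg0 2
      _ = G2 * (V / (2 * a₀)) := by
          rw [mul_pow, Real.sq_sqrt hG2nonneg, Real.sq_sqrt harg0]
  have h2a : (0:ℝ) < 2 * a₀ := by positivity
  have hVpos' : 0 < V := hVpos
  have h' : 2 * a₀ * V ^ 2 ≤ G2 * V := by
    have h := mul_le_mul_of_nonneg_left hsq h2a.le
    have heq : 2 * a₀ * (G2 * (V / (2 * a₀))) = G2 * V := by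
      field_simp
    rw [heq] at h
    linarith
  nlinarith [h', hVpos']
end
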